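/- arXiv:2203.10691 — 3 statements merged into one kernel-verified Lean document; each statement's English description precedes it below -/
import Mathlib

section
/- Let m ≥ 1 be an integer, 1 < q < ∞, 1 < s < ∞, and w_a(x) = |x|^a with −n < a < n(s−1). If p ≤ (n + min{a,0})/(2m + n/q) and p ≤ 1, then the weighted Calderón–Hardy space H^p_{q,2m}(ℝⁿ, w_a) is trivial: H^p_{q,2m}(ℝⁿ, w_a) = {0}. Equivalently, if g ∈ L^q_loc(ℝⁿ) and the class G of g in E^q_{2m−1} satisfies ∫_{ℝⁿ}[N_{q,2m}(G;x)]^p |x|^a dx < ∞, then g equals a polynomial of degree at most 2m−1 almost everywhere. -/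
open MeasureTheory ENNReal Filter Topology

noncomputable section

/-- Euclidean space `ℝⁿ`. -/
abbrev En (n : ℕ) : Type := EuclideanSpace ℝ (Fin n)

/-- The (closed) cube centered at `x` with side length `r`. -/
def cube {n : ℕ} (x : En n) (r : ℝ) : Set (En n) :=
  {y | ∀ i, |y i - x i| ≤ r / 2}

/-- The normalized `L^q` seminorm `|g|_{q,Q} = (|Q|⁻¹ ∫_Q |g|^q)^{1/q}` over a set `Q`. -/
def lqQ {n : ℕ} (q : ℝ) (g : En n → ℝ) (Q : Set (En n)) : ℝ≥0∞ :=
  ((volume Q)⁻¹ * ∫⁻ y in Q, ENNReal.ofReal (|g y| ^ q)) ^ (1 / q)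

/-- The Calderón maximal function `η_{q,γ}(g;x) = sup_{r>0} r^{-γ} |g|_{q,Q(x,r)}`. -/
def eta {n : ℕ} (q γ : ℝ) (g : En n → ℝ) (x : En n) : ℝ≥0∞ :=
  ⨆ (r : ℝ) (_ : 0 < r), ENNReal.ofReal (r ^ (-γ)) * lqQ q g (cube x r)

/-- `P` is (the function given by) a real polynomial on `ℝⁿ` of total degree at most `k`. -/
def IsPolyDegLe {n : ℕ} (k : ℕ) (P : En n → ℝ) : Prop :=
  ∃ p : MvPolynomial (Fin n) ℝ, p.totalDegree ≤ k ∧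
    ∀ x : En n, P x = MvPolynomial.eval (fun i => x i) p

/-- `g` belongs locally to `L^q` (on every cube). -/
def MemLqLoc {n : ℕ} (q : ℝ) (g : En n → ℝ) : Prop :=
  Measurable g ∧ ∀ (x : En n) (r : ℝ), 0 < r →
    ∫⁻ y in cube x r, ENNReal.ofReal (|g y| ^ q) < ⊤

/-- The maximal function `N_{q,γ}(G;x)` of the class `G` of `g` in `E^q_k`. -/
def Nmax {n : ℕ} (q γ : ℝ) (k : ℕ) (g : En n → ℝ) (x : En n) : ℝ≥0∞ :=
  ⨅ P : {P : En n → ℝ // IsPolyDegLe k P}, eta q γ (fun y => g y - P.1 y) x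

/-- The seminorm `‖G‖_{q,Q}` of the class `G` of `g` in `E^q_k`. -/
def qnormQ {n : ℕ} (q : ℝ) (k : ℕ) (g : En n → ℝ) (Q : Set (En n)) : ℝ≥0∞ :=
  ⨅ P : {P : En n → ℝ // IsPolyDegLe k P}, lqQ q (fun y => g y - P.1 y) Q

/-- A weight: nonnegative, locally integrable, positive a.e. -/
def IsWeight {n : ℕ} (w : En n → ℝ) : Prop :=
  Measurable w ∧ (∀ x, 0 ≤ w x) ∧ (∀ᵐ x ∂(volume : Measure (En n)), 0 < w x) ∧
    LocallyIntegrable w volume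

/-- `w(Q) = ∫_Q w`. -/
def wInt {n : ℕ} (w : En n → ℝ) (Q : Set (En n)) : ℝ≥0∞ :=
  ∫⁻ y in Q, ENNReal.ofReal (w y)

/-- The Muckenhoupt class `A_s`, `1 < s < ∞`. -/
def MuckA {n : ℕ} (s : ℝ) (w : En n → ℝ) : Prop :=
  ∃ C : ℝ≥0∞, C < ⊤ ∧ ∀ (x : En n) (r : ℝ), 0 < r →
    ((volume (cube x r))⁻¹ * wInt w (cube x r)) *
      ((volume (cube x r))⁻¹ *
        ∫⁻ y in cube x r, ENNReal.ofReal (w y) ^ (-(1 / (s - 1)))) ^ (s - 1) ≤ C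

/-- The class `A_∞ = ∪_{s} A_s`. -/
def MuckAinf {n : ℕ} (w : En n → ℝ) : Prop := ∃ s : ℝ, 1 < s ∧ MuckA s w

/-- The reverse Hölder class `RH_s`. -/
def RevHolder {n : ℕ} (s : ℝ) (w : En n → ℝ) : Prop :=
  ∃ C : ℝ≥0∞, C < ⊤ ∧ ∀ (x : En n) (r : ℝ), 0 < r →
    ((volume (cube x r))⁻¹ * ∫⁻ y in cube x r, ENNReal.ofReal (w y) ^ s) ^ (1 / s) ≤
      C * ((volume (cube x r))⁻¹ * wInt w (cube x r))

/-- The weighted Calderón–Hardy "norm" `‖G‖ = ‖N_{q,γ}(G;·)‖_{L^p(w)}` of the class of `g`. -/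
def chNorm {n : ℕ} (q γ : ℝ) (k : ℕ) (p : ℝ) (w : En n → ℝ) (g : En n → ℝ) : ℝ≥0∞ :=
  (∫⁻ x, Nmax q γ k g x ^ p * ENNReal.ofReal (w x)) ^ (1 / p)

/-- Directional derivative along the `i`-th coordinate. -/
def dirDeriv {n : ℕ} (i : Fin n) (f : En n → ℝ) : En n → ℝ :=
  fun x => fderiv ℝ f x (EuclideanSpace.single i 1)

/-- Iterated directional derivatives along a list of coordinates. -/
def pderivList {n : ℕ} : List (Fin n) → (En n → ℝ) → En n → ℝ
  | [], f => f
  | i :: L, f => dirDeriv i (pderivList L f)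

/-- The partial derivative `∂^β` for a multi-index `β`. -/
def pderivM {n : ℕ} (β : Fin n → ℕ) (f : En n → ℝ) : En n → ℝ :=
  pderivList ((List.finRange n).flatMap fun i => List.replicate (β i) i) f

/-- The Laplacian. -/
def lap {n : ℕ} (f : En n → ℝ) : En n → ℝ :=
  fun x => ∑ i, dirDeriv i (dirDeriv i f) x

/-- A Schwartz function (as a plain function). -/
def IsSchwartzFn {n : ℕ} (φ : En n → ℝ) : Prop :=
  ContDiff ℝ (⊤ : ℕ∞) φ ∧ ∀ (k : ℕ) (β : Fin n → ℕ), ∃ C : ℝ,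
    ∀ x, (1 + ‖x‖) ^ k * |pderivM β φ x| ≤ C

/-- The Schwartz seminorm `p_N(φ) = Σ_{|β| ≤ N} sup_x (1+|x|)^N |∂^β φ(x)|`. -/
def pSemi {n : ℕ} (N : ℕ) (φ : En n → ℝ) : ℝ≥0∞ :=
  ∑ β : Fin n → Fin (N + 1),
    if (∑ i, (β i : ℕ)) ≤ N then
      ⨆ x : En n, ENNReal.ofReal ((1 + ‖x‖) ^ N * |pderivM (fun i => (β i : ℕ)) φ x|)
    else 0

/-- The grand maximal function of a distribution given by the pairing `u`. -/
def grandMax {n : ℕ} (N : ℕ) (u : (En n → ℝ) → ℝ) (x : En n) : ℝ≥0∞ :=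
  ⨆ (t : ℝ) (_ : 0 < t) (φ : En n → ℝ) (_ : IsSchwartzFn φ) (_ : pSemi N φ ≤ 1),
    ENNReal.ofReal |u fun y => (t ^ n)⁻¹ * φ (t⁻¹ • (x - y))|

/-- The weighted Hardy space "norm" `‖f‖_{H^p(w)} = ‖M_{F_N} f‖_{L^p(w)}`. -/
def hardyNorm {n : ℕ} (N : ℕ) (p : ℝ) (w : En n → ℝ) (u : (En n → ℝ) → ℝ) : ℝ≥0∞ :=
  (∫⁻ x, grandMax N u x ^ p * ENNReal.ofReal (w x)) ^ (1 / p)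

/-- The uncentered Hardy–Littlewood maximal operator (ℝ≥0∞-valued version). -/
def maxFnE {n : ℕ} (f : En n → ℝ≥0∞) (x : En n) : ℝ≥0∞ :=
  ⨆ (z : En n) (r : ℝ) (_ : 0 < r) (_ : x ∈ cube z r),
    (volume (cube z r))⁻¹ * ∫⁻ y in cube z r, f y

/-- The uncentered Hardy–Littlewood maximal operator over cubes. -/
def maxFn {n : ℕ} (f : En n → ℝ) (x : En n) : ℝ≥0∞ :=
  maxFnE (fun y => ENNReal.ofReal |f y|) x

/-- The fundamental solution `Φ` of `Δ^m`. -/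
def Phi {n : ℕ} (m : ℕ) (C₁ C₂ : ℝ) (x : En n) : ℝ :=
  if Even n ∧ n ≤ 2 * m then C₁ * ‖x‖ ^ ((2 * (m : ℤ) - (n : ℤ))) * Real.log ‖x‖
  else C₂ * ‖x‖ ^ ((2 * (m : ℤ) - (n : ℤ)))

/-- The truncated singular integral maximal operator `T*_α`. -/
def Tstar {n : ℕ} (m : ℕ) (C₁ C₂ : ℝ) (α : Fin n → ℕ) (a : En n → ℝ) (x : En n) : ℝ≥0∞ :=
  ⨆ (ε : ℝ) (_ : 0 < ε),
    ENNReal.ofReal |∫ y in {y : En n | ε < dist x y}, pderivM α (Phi m C₁ C₂) (x - y) * a y|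

/-- The critical index `q_w` of a weight. -/
def qIndex {n : ℕ} (w : En n → ℝ) : ℝ := sInf {s : ℝ | 1 < s ∧ MuckA s w}

/-- The set of reverse Hölder exponents of `w`. -/
def rhSet {n : ℕ} (w : En n → ℝ) : Set ℝ := {s : ℝ | 1 < s ∧ RevHolder s w}

/-- The quantity `r_w/(r_w - 1)`, with the convention that it is `1` when `r_w = ∞`. -/
def rwFactor {n : ℕ} (w : En n → ℝ) : ℝ :=
  haveI := Classical.propDecidable (BddAbove (rhSet w))
  if BddAbove (rhSet w) then sSup (rhSet w) / (sSup (rhSet w) - 1) else 1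

/-- A `w-(p, p₀, d)` atom supported in the cube `Q(x₀, r)`. -/
def IsAtomOn {n : ℕ} (p p₀ : ℝ) (d : ℤ) (w : En n → ℝ) (x₀ : En n) (r : ℝ)
    (a : En n → ℝ) : Prop :=
  Measurable a ∧ Function.support a ⊆ cube x₀ r ∧
    (∫⁻ y, ENNReal.ofReal (|a y| ^ p₀)) ^ (1 / p₀) ≤
      volume (cube x₀ r) ^ (1 / p₀) * (wInt w (cube x₀ r)) ^ (-(1 / p)) ∧
    ∀ β : Fin n → ℕ, ((∑ i, β i : ℤ) ≤ d) →
      ∫ y, (∏ i, y i ^ β i) * a y = 0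


namespace CHAux

open MvPolynomial Metric

variable {n : ℕ}

lemma abs_apply_le_norm (x : En n) (i : Fin n) : |x i| ≤ ‖x‖ := by
  rw [EuclideanSpace.norm_eq, ← Real.sqrt_sq_eq_abs]
  refine Real.sqrt_le_sqrt ?_
  have h := Finset.single_le_sum (f := fun j : Fin n => ‖x j‖ ^ 2)
    (fun j _ => by positivity) (Finset.mem_univ i)
  simpa [Real.norm_eq_abs, sq_abs] using h

lemma isClosed_cube (x : En n) (r : ℝ) : IsClosed (cube x r) := by
  have h : cube x r = ⋂ i, {y : En n | |y i - x i| ≤ r / 2} := by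
    ext y; simp [cube, Set.mem_iInter]
  rw [h]
  exact isClosed_iInter fun i => isClosed_le
    ((continuous_abs.comp (((EuclideanSpace.proj i (𝕜 := ℝ)).continuous).sub continuous_const)))
    continuous_const

lemma measurableSet_cube (x : En n) (r : ℝ) : MeasurableSet (cube x r) :=
  (isClosed_cube x r).measurableSet

lemma cube_subset_closedBall (x : En n) {r : ℝ} (hr : 0 ≤ r) :
    cube x r ⊆ Metric.closedBall x ((n : ℝ) * r) := by
  intro y hy
  rw [Metric.mem_closedBall, dist_eq_norm, EuclideanSpace.norm_eq]
  rw [show ((n : ℝ) * r) = Real.sqrt (((n : ℝ) * r) ^ 2) from (Real.sqrt_sq (by positivity)).symm]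
  apply Real.sqrt_le_sqrt
  have h1 : ∀ i : Fin n, ‖(y - x) i‖ ^ 2 ≤ (r / 2) ^ 2 := by
    intro i
    have h2 := hy i
    have h3 : ‖(y - x) i‖ = |y i - x i| := by
      simp [Real.norm_eq_abs]
    rw [h3, sq_abs, ← sq_abs (y i - x i)]
    have : |y i - x i| ^ 2 ≤ (r/2)^2 := by
      apply pow_le_pow_left₀ (abs_nonneg _) h2
    simpa [sq_abs] using this
  calc ∑ i, ‖(y - x) i‖ ^ 2 ≤ ∑ _i : Fin n, (r / 2) ^ 2 :=
        Finset.sum_le_sum fun i _ => h1 i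
    _ = (n : ℝ) * (r / 2) ^ 2 := by simp [Finset.sum_const, mul_comm]
    _ ≤ ((n : ℝ) * r) ^ 2 := by
        have h5 : n ≤ n ^ 2 := Nat.le_self_pow two_ne_zero n
        have h6 : (n : ℝ) ≤ (n : ℝ) ^ 2 := by exact_mod_cast h5
        nlinarith [mul_le_mul_of_nonneg_right h6 (sq_nonneg r), sq_nonneg r,
          Nat.cast_nonneg (α := ℝ) n]

lemma volume_cube_le (x : En n) {r : ℝ} (hr : 0 ≤ r) :
    volume (cube x r) ≤
      ENNReal.ofReal (((n : ℝ)) ^ n) * volume (Metric.ball (0 : En n) 1) * ENNReal.ofReal (r ^ n) := by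
  calc volume (cube x r) ≤ volume (Metric.closedBall x ((n : ℝ) * r)) :=
        measure_mono (cube_subset_closedBall x hr)
    _ = ENNReal.ofReal (((n : ℝ) * r) ^ Module.finrank ℝ (En n)) * volume (Metric.ball (0 : En n) 1) :=
        MeasureTheory.Measure.addHaar_closedBall _ _ (by positivity)
    _ = ENNReal.ofReal (((n : ℝ)) ^ n) * volume (Metric.ball (0 : En n) 1) * ENNReal.ofReal (r ^ n) := by
        rw [finrank_euclideanSpace_fin, mul_pow, ENNReal.ofReal_mul (by positivity)]
        ring

lemma nontrivial_En (hn : 1 ≤ n) : Nontrivial (En n) := by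
  refine ⟨⟨EuclideanSpace.single ⟨0, hn⟩ 1, 0, fun h => ?_⟩⟩
  have h2 : (1 : ℝ) = 0 := by
    have h3 := congrArg (fun v : En n => v ⟨0, hn⟩) h
    simpa [EuclideanSpace.single_apply] using h3
  exact one_ne_zero h2

lemma lintegral_rpow_neg_n_top (hn : 1 ≤ n) {R₁ : ℝ} (hR : 1 ≤ R₁) :
    ∫⁻ x in {x : En n | R₁ ≤ ‖x‖}, ENNReal.ofReal (‖x‖ ^ (-(n : ℝ))) = ⊤ := by
  haveI : Nontrivial (En n) := nontrivial_En hn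
  have hBpos : 0 < volume (Metric.ball (0 : En n) 1) := Metric.measure_ball_pos _ _ one_pos
  have hBfin : volume (Metric.ball (0 : En n) 1) < ⊤ := measure_ball_lt_top
  have hR0 : (0 : ℝ) < R₁ := lt_of_lt_of_le one_pos hR
  have hball : ∀ u : ℝ, 0 ≤ u → volume (Metric.ball (0 : En n) u) =
      ENNReal.ofReal (u ^ n) * volume (Metric.ball (0 : En n) 1) := by
    intro u hu
    rw [MeasureTheory.Measure.addHaar_ball _ _ hu, finrank_euclideanSpace_fin]
  set A : ℕ → Set (En n) := fun j => Metric.ball (0 : En n) (R₁ * 2 ^ (j + 1)) \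
    Metric.ball (0 : En n) (R₁ * 2 ^ j) with hA
  have hAm : ∀ j, MeasurableSet (A j) := fun j =>
    measurableSet_ball.diff measurableSet_ball
  have hmono : ∀ i j : ℕ, i < j → Disjoint (A i) (A j) := by
    intro i j hij
    rw [Set.disjoint_left]
    intro x hxi hxj
    have h1 : ‖x‖ < R₁ * 2 ^ (i + 1) := by
      have := hxi.1; rwa [mem_ball_zero_iff] at this
    have h2 : R₁ * 2 ^ j ≤ ‖x‖ := by
      have := hxj.2
      rw [mem_ball_zero_iff] at this
      linarith [not_lt.mp this]
    have h3 : (2 : ℝ) ^ (i + 1) ≤ 2 ^ j := by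
      apply pow_le_pow_right₀ one_le_two
      omega
    nlinarith [hR0]
  have hdisj : Pairwise (Function.onFun Disjoint A) := by
    intro i j hij
    rcases hij.lt_or_gt with h | h
    · exact hmono i j h
    · exact (hmono j i h).symm
  have hsub : (⋃ j, A j) ⊆ {x : En n | R₁ ≤ ‖x‖} := by
    intro x hx
    obtain ⟨j, hj⟩ := Set.mem_iUnion.mp hx
    have h2 : R₁ * 2 ^ j ≤ ‖x‖ := by
      have := hj.2
      rw [mem_ball_zero_iff] at this
      linarith [not_lt.mp this]
    have : R₁ ≤ R₁ * 2 ^ j := by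
      nlinarith [one_le_pow₀ (one_le_two (α := ℝ)) (n := j)]
    exact le_trans this h2
  set δ : ℝ≥0∞ := ENNReal.ofReal (1 - 2 ^ (-(n : ℝ))) * volume (Metric.ball (0 : En n) 1) with hδ
  have hδ0 : δ ≠ 0 := by
    apply mul_ne_zero _ hBpos.ne'
    rw [Ne, ENNReal.ofReal_eq_zero, not_le, sub_pos]
    refine Real.rpow_lt_one_of_one_lt_of_neg one_lt_two ?_
    have : (0 : ℝ) < n := by exact_mod_cast Nat.pos_of_ne_zero (by omega)
    linarith
  have hterm : ∀ j : ℕ, δ ≤ ∫⁻ x in A j, ENNReal.ofReal (‖x‖ ^ (-(n : ℝ))) := by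
    intro j
    set t : ℝ := R₁ * 2 ^ j with ht
    have ht0 : 0 < t := by positivity
    have hs : R₁ * 2 ^ (j + 1) = 2 * t := by rw [ht]; ring
    have hvol : volume (A j) = (ENNReal.ofReal ((2 * t) ^ n) - ENNReal.ofReal (t ^ n)) *
        volume (Metric.ball (0 : En n) 1) := by
      rw [hA]
      rw [measure_diff (Metric.ball_subset_ball (by nlinarith))
        measurableSet_ball.nullMeasurableSet measure_ball_lt_top.ne]
      rw [hs, ← ht, hball (2 * t) (by positivity), hball t ht0.le,
        ENNReal.sub_mul (fun _ _ => hBfin.ne)]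
    have hkey : ENNReal.ofReal ((2 * t) ^ (-(n : ℝ))) * volume (A j) = δ := by
      rw [hvol, ← mul_assoc, hδ]
      congr 1
      rw [← ENNReal.ofReal_sub _ (by positivity), ← ENNReal.ofReal_mul (by positivity)]
      congr 1
      have hnp : ((2 * t) ^ (n : ℕ) : ℝ) = (2 * t) ^ (n : ℝ) := (Real.rpow_natCast _ n).symm
      have hnp2 : (t ^ (n : ℕ) : ℝ) = t ^ (n : ℝ) := (Real.rpow_natCast _ n).symm
      rw [hnp, hnp2, mul_sub, ← Real.rpow_add (by positivity), neg_add_cancel, Real.rpow_zero]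
      congr 1
      rw [Real.mul_rpow (by norm_num) ht0.le, mul_assoc, ← Real.rpow_add ht0, neg_add_cancel,
        Real.rpow_zero, mul_one]
    calc δ = ENNReal.ofReal ((2 * t) ^ (-(n : ℝ))) * volume (A j) := hkey.symm
      _ = ∫⁻ _x in A j, ENNReal.ofReal ((2 * t) ^ (-(n : ℝ))) := (setLIntegral_const _ _).symm
      _ ≤ ∫⁻ x in A j, ENNReal.ofReal (‖x‖ ^ (-(n : ℝ))) := by
          apply setLIntegral_mono' (hAm j)
          intro x hx
          apply ENNReal.ofReal_le_ofReal
          have hx1 : ‖x‖ < 2 * t := by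
            have h4 := hx.1; rw [mem_ball_zero_iff] at h4; rw [hs] at h4; exact h4
          have hx0 : 0 < ‖x‖ := by
            have h5 := hx.2; rw [mem_ball_zero_iff] at h5
            have := not_lt.mp h5; linarith
          refine Real.rpow_le_rpow_of_nonpos hx0 hx1.le ?_
          simp
  refine top_le_iff.mp ?_
  calc (⊤ : ℝ≥0∞) = ∑' _j : ℕ, δ := (ENNReal.tsum_const_eq_top_of_ne_zero hδ0).symm
    _ ≤ ∑' j : ℕ, ∫⁻ x in A j, ENNReal.ofReal (‖x‖ ^ (-(n : ℝ))) := ENNReal.tsum_le_tsum hterm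
    _ = ∫⁻ x in ⋃ j, A j, ENNReal.ofReal (‖x‖ ^ (-(n : ℝ))) := (lintegral_iUnion hAm hdisj _).symm
    _ ≤ ∫⁻ x in {x : En n | R₁ ≤ ‖x‖}, ENNReal.ofReal (‖x‖ ^ (-(n : ℝ))) :=
        lintegral_mono_set hsub
lemma analyticOnNhd_eval (p : MvPolynomial (Fin n) ℝ) :
    AnalyticOnNhd ℝ (fun x : En n => MvPolynomial.eval (fun i => x i) p) Set.univ := by
  induction p using MvPolynomial.induction_on with
  | C a => simpa using analyticOnNhd_const
  | add p₁ p₂ hp₁ hp₂ => simp only [map_add]; exact hp₁.add hp₂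
  | mul_X p₁ i hp₁ =>
      simp only [map_mul, MvPolynomial.eval_X]
      exact hp₁.mul ((EuclideanSpace.proj (𝕜 := ℝ) i).analyticOnNhd _)

lemma continuous_evalFn (p : MvPolynomial (Fin n) ℝ) :
    Continuous (fun x : En n => MvPolynomial.eval (fun i => x i) p) := by
  rw [← continuousOn_univ]
  exact (analyticOnNhd_eval p).continuousOn

lemma eval_eq_of_ae_eq_cube (hn : 1 ≤ n) {p₁ p₂ : MvPolynomial (Fin n) ℝ}
    (h : (fun x : En n => MvPolynomial.eval (fun i => x i) p₁)
      =ᵐ[volume.restrict (cube (0 : En n) 1)] (fun x => MvPolynomial.eval (fun i => x i) p₂)) :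
    ∀ x : En n, MvPolynomial.eval (fun i => x i) p₁ = MvPolynomial.eval (fun i => x i) p₂ := by
  set f₁ : En n → ℝ := fun x => MvPolynomial.eval (fun i => x i) p₁ with hf₁
  set f₂ : En n → ℝ := fun x => MvPolynomial.eval (fun i => x i) p₂ with hf₂
  have hc₁ : Continuous f₁ := continuous_evalFn p₁
  have hc₂ : Continuous f₂ := continuous_evalFn p₂
  set U : Set (En n) := ⋂ i, {y : En n | |y i| < 1 / 2} with hU
  have hUopen : IsOpen U := isOpen_iInter_of_finite fun i =>
    isOpen_lt (continuous_abs.comp (EuclideanSpace.proj (𝕜 := ℝ) i).continuous) continuous_const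
  have hUsub : U ⊆ cube (0 : En n) 1 := by
    intro y hy i
    have := Set.mem_iInter.mp hy i
    simp only [Set.mem_setOf_eq] at this
    have hz : (0 : En n) i = 0 := rfl
    rw [hz]
    simpa using this.le
  have h0U : (0 : En n) ∈ U := by
    refine Set.mem_iInter.mpr fun i => ?_
    simp only [Set.mem_setOf_eq]
    have hz : (0 : En n) i = 0 := rfl
    rw [hz]; norm_num
  have hNe : MeasurableSet {x : En n | f₁ x ≠ f₂ x} :=
    (measurableSet_eq_fun hc₁.measurable hc₂.measurable).compl
  have hnull : volume ({x : En n | f₁ x ≠ f₂ x} ∩ cube (0 : En n) 1) = 0 := by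
    have h2 : (volume.restrict (cube (0 : En n) 1)) {x : En n | f₁ x ≠ f₂ x} = 0 := h
    rwa [Measure.restrict_apply hNe] at h2
  have hEqOn : Set.EqOn f₁ f₂ U := by
    intro x hx
    by_contra hne
    have hDopen : IsOpen ({x : En n | f₁ x ≠ f₂ x} ∩ U) := by
      have hopen : IsOpen {x : En n | f₁ x ≠ f₂ x} := isOpen_ne_fun hc₁ hc₂
      exact hopen.inter hUopen
    have hpos : 0 < volume ({x : En n | f₁ x ≠ f₂ x} ∩ U) :=
      hDopen.measure_pos volume ⟨x, hne, hx⟩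
    have hle : volume ({x : En n | f₁ x ≠ f₂ x} ∩ U) ≤
        volume ({x : En n | f₁ x ≠ f₂ x} ∩ cube (0 : En n) 1) :=
      measure_mono (Set.inter_subset_inter_right _ hUsub)
    rw [hnull] at hle
    exact absurd (le_antisymm hle zero_le) hpos.ne'
  have hev : f₁ =ᶠ[nhds (0 : En n)] f₂ :=
    Filter.eventuallyEq_of_mem (hUopen.mem_nhds h0U) hEqOn
  have := (analyticOnNhd_eval p₁).eqOn_of_preconnected_of_eventuallyEq (analyticOnNhd_eval p₂)
    isPreconnected_univ (Set.mem_univ (0 : En n)) hev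
  exact fun x => this (Set.mem_univ x)
lemma inv_rpow_mul_ofReal_pow (K : ℝ≥0∞) (hK0 : K ≠ 0) (hKtop : K ≠ ⊤) {r q : ℝ}
    (hr : 0 < r) (hq : 0 < q) :
    ((K * ENNReal.ofReal (r ^ n)) ^ (1 / q))⁻¹ =
      (K ^ (1 / q))⁻¹ * ENNReal.ofReal (r ^ (-((n : ℝ) / q))) := by
  have h1 : ENNReal.ofReal (r ^ n) ^ (1 / q) = ENNReal.ofReal (r ^ ((n : ℝ) / q)) := by
    rw [← Real.rpow_natCast r n, ENNReal.ofReal_rpow_of_pos (Real.rpow_pos_of_pos hr _),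
      ← Real.rpow_mul hr.le]
    congr 1
    field_simp
  rw [ENNReal.mul_rpow_of_nonneg _ _ (by positivity), h1,
    ENNReal.mul_inv (Or.inr ENNReal.ofReal_ne_top)
      (Or.inl (ENNReal.rpow_ne_top_of_nonneg (by positivity) hKtop)),
    ← ENNReal.ofReal_inv_of_pos (Real.rpow_pos_of_pos hr _), ← Real.rpow_neg hr.le]
lemma exists_poly_of_iInf_eq_zero (hn : 1 ≤ n) (k : ℕ) {q : ℝ} (hq : 1 < q)
    {g : En n → ℝ} (hmeas : Measurable g) {R : ℝ} (hR : 0 < R)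
    (hgQ : ∫⁻ y in cube (0 : En n) R, ENNReal.ofReal (|g y| ^ q) < ⊤)
    (h0 : ⨅ P : {P : En n → ℝ // IsPolyDegLe k P},
        (∫⁻ y in cube (0 : En n) R, ENNReal.ofReal (|g y - P.1 y| ^ q)) ^ (1 / q) = 0) :
    ∃ pp : MvPolynomial (Fin n) ℝ, pp.totalDegree ≤ k ∧
      ∀ᵐ y ∂(volume.restrict (cube (0 : En n) R)), g y = MvPolynomial.eval (fun i => y i) pp := by
  classical
  set Q : Set (En n) := cube (0 : En n) R with hQdef
  set μ : Measure (En n) := volume.restrict Q with hμ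
  have hQmeas : MeasurableSet Q := measurableSet_cube _ _
  have hQfin : volume Q < ⊤ := by
    refine lt_of_le_of_lt (volume_cube_le _ hR.le) ?_
    exact ENNReal.mul_lt_top (ENNReal.mul_lt_top ENNReal.ofReal_lt_top measure_ball_lt_top)
      ENNReal.ofReal_lt_top
  haveI : IsFiniteMeasure μ := ⟨by rwa [hμ, Measure.restrict_apply_univ]⟩
  set qE : ℝ≥0∞ := ENNReal.ofReal q with hqE
  have hq0 : (0 : ℝ) < q := lt_trans one_pos hq
  have hqE0 : qE ≠ 0 := by
    rw [hqE, Ne, ENNReal.ofReal_eq_zero, not_le]; exact hq0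
  have hqEtop : qE ≠ ⊤ := ENNReal.ofReal_ne_top
  have hqEtoReal : qE.toReal = q := ENNReal.toReal_ofReal hq0.le
  haveI : Fact (1 ≤ qE) := ⟨ENNReal.one_le_ofReal.mpr hq.le⟩
  have hsnorm : ∀ f : En n → ℝ, eLpNorm f qE μ =
      (∫⁻ y in Q, ENNReal.ofReal (|f y| ^ q)) ^ (1 / q) := by
    intro f
    rw [MeasureTheory.eLpNorm_eq_lintegral_rpow_enorm_toReal hqE0 hqEtop, hqEtoReal, hμ]
    congr 1
    apply lintegral_congr
    intro y
    rw [Real.enorm_eq_ofReal_abs, ENNReal.ofReal_rpow_of_nonneg (abs_nonneg _) hq0.le]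
  have hgmem : MeasureTheory.MemLp g qE μ := by
    refine ⟨hmeas.aestronglyMeasurable, ?_⟩
    rw [hsnorm]
    exact ENNReal.rpow_lt_top_of_nonneg (by positivity) hgQ.ne
  set evalFn : MvPolynomial (Fin n) ℝ → En n → ℝ :=
    fun pp x => MvPolynomial.eval (fun i => x i) pp with hevalFn
  have hpolymem : ∀ pp : MvPolynomial (Fin n) ℝ, MeasureTheory.MemLp (evalFn pp) qE μ := by
    intro pp
    obtain ⟨C, hC⟩ := (isCompact_closedBall (0 : En n) ((n : ℝ) * R)).exists_bound_of_continuousOn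
      (continuous_evalFn pp).continuousOn
    refine MeasureTheory.MemLp.of_bound (continuous_evalFn pp).aestronglyMeasurable C ?_
    rw [hμ]
    exact ae_restrict_of_forall_mem hQmeas fun y hy =>
      hC y (cube_subset_closedBall (0 : En n) hR.le hy)
  set Ψ : MvPolynomial (Fin n) ℝ →ₗ[ℝ] MeasureTheory.Lp ℝ qE μ :=
    { toFun := fun pp => (hpolymem pp).toLp _
      map_add' := fun p1 p2 => by
        rw [← MeasureTheory.MemLp.toLp_add (hpolymem p1) (hpolymem p2)]
        refine (MeasureTheory.MemLp.toLp_eq_toLp_iff _ _).mpr ?_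
        refine Filter.EventuallyEq.of_eq ?_
        funext x
        simp [hevalFn, map_add, Pi.add_apply]
      map_smul' := fun c p1 => by
        rw [RingHom.id_apply, ← MeasureTheory.MemLp.toLp_const_smul c (hpolymem p1)]
        refine (MeasureTheory.MemLp.toLp_eq_toLp_iff (hpolymem (c • p1))
          ((hpolymem p1).const_smul c)).mpr ?_
        refine Filter.EventuallyEq.of_eq ?_
        funext x
        simp [hevalFn, MvPolynomial.smul_eval, Pi.smul_apply, smul_eq_mul] } with hΨ
  set S : Submodule ℝ (MeasureTheory.Lp ℝ qE μ) :=
    Submodule.map Ψ (MvPolynomial.restrictTotalDegree (Fin n) ℝ k) with hS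
  haveI : FiniteDimensional ℝ (MvPolynomial.restrictTotalDegree (Fin n) ℝ k) := inferInstance
  haveI hSfd : FiniteDimensional ℝ S := inferInstance
  have hSclosed : IsClosed (S : Set (MeasureTheory.Lp ℝ qE μ)) :=
    Submodule.closed_of_finiteDimensional S
  set G : MeasureTheory.Lp ℝ qE μ := hgmem.toLp g with hG
  have hGclos : G ∈ closure (S : Set (MeasureTheory.Lp ℝ qE μ)) := by
    rw [Metric.mem_closure_iff]
    intro ε hε
    have hlt : (⨅ P : {P : En n → ℝ // IsPolyDegLe k P},
        (∫⁻ y in cube (0 : En n) R, ENNReal.ofReal (|g y - P.1 y| ^ q)) ^ (1 / q)) <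
        ENNReal.ofReal ε := by
      rw [h0]; exact ENNReal.ofReal_pos.mpr hε
    obtain ⟨P, hP⟩ := iInf_lt_iff.mp hlt
    obtain ⟨pp, hppdeg, hppeq⟩ := P.2
    have hPfun : P.1 = evalFn pp := funext hppeq
    refine ⟨Ψ pp, Submodule.mem_map_of_mem
      ((MvPolynomial.mem_restrictTotalDegree _ _ _).mpr hppdeg), ?_⟩
    have hsub : G - Ψ pp = (hgmem.sub (hpolymem pp)).toLp (g - evalFn pp) :=
      (MeasureTheory.MemLp.toLp_sub hgmem (hpolymem pp)).symm
    rw [dist_eq_norm, hsub, MeasureTheory.Lp.norm_toLp]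
    have hflt : eLpNorm (g - evalFn pp) qE μ < ENNReal.ofReal ε := by
      rw [hsnorm]
      have heq : (fun y => |(g - evalFn pp) y|) = fun y => |g y - P.1 y| := by
        funext y; rw [hPfun]; rfl
      calc (∫⁻ y in Q, ENNReal.ofReal (|(g - evalFn pp) y| ^ q)) ^ (1 / q)
          = (∫⁻ y in Q, ENNReal.ofReal (|g y - P.1 y| ^ q)) ^ (1 / q) := by
            congr 1
            apply lintegral_congr
            intro y
            rw [show |(g - evalFn pp) y| = |g y - P.1 y| from congrFun heq y]
        _ < ENNReal.ofReal ε := hP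
    rw [← ENNReal.lt_ofReal_iff_toReal_lt (ne_top_of_lt hflt)]
    exact hflt
  have hGS : G ∈ (S : Set (MeasureTheory.Lp ℝ qE μ)) := by
    rw [← hSclosed.closure_eq]; exact hGclos
  obtain ⟨pp, hppW, hΨpp⟩ := Submodule.mem_map.mp hGS
  refine ⟨pp, (MvPolynomial.mem_restrictTotalDegree _ _ _).mp hppW, ?_⟩
  have hΨpp' : (hpolymem pp).toLp (evalFn pp) = hgmem.toLp g := hΨpp
  have hae : evalFn pp =ᵐ[μ] g :=
    (MeasureTheory.MemLp.toLp_eq_toLp_iff (hpolymem pp) hgmem).mp hΨpp'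
  filter_upwards [hae] with y hy
  exact hy.symm

end CHAux

/-- **Theorem.** For `w_a(x) = |x|^a`, `-n < a < n(s-1)`, if `p ≤ (n + min{a,0})/(2m+n/q)`
and `p ≤ 1`, then `𝓗^p_{q,2m}(ℝⁿ,w_a) = {0}`: any `g ∈ L^q_loc` whose class `G` satisfies
`∫ [N_{q,2m}(G;x)]^p |x|^a dx < ∞` is a.e. a polynomial of degree at most `2m-1`. -/
theorem weighted_CalderonHardy_trivial_below_threshold
    (n m : ℕ) (hn : 1 ≤ n) (hm : 1 ≤ m) (q s p a : ℝ)
    (hq : 1 < q) (hs : 1 < s) (ha1 : -(n : ℝ) < a) (ha2 : a < n * (s - 1))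
    (hp0 : 0 < p) (hp1 : p ≤ ((n : ℝ) + min a 0) / (2 * m + n / q)) (hp2 : p ≤ 1)
    (g : En n → ℝ) (hg : MemLqLoc q g)
    (hfin : ∫⁻ x, Nmax q (2 * m) (2 * m - 1) g x ^ p * ENNReal.ofReal (‖x‖ ^ a) < ⊤) :
    ∃ P : En n → ℝ, IsPolyDegLe (2 * m - 1) P ∧
      ∀ᵐ x ∂(volume : Measure (En n)), g x = P x := by
  classical
  have hq0 : (0 : ℝ) < q := lt_trans one_pos hq
  have hn0 : (0 : ℝ) < n := by exact_mod_cast Nat.pos_of_ne_zero (by omega)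
  have hm1 : (1 : ℝ) ≤ m := by exact_mod_cast hm
  set k : ℕ := 2 * m - 1 with hk
  set γ : ℝ := 2 * (m : ℝ) with hγ
  set D : ℝ := γ + (n : ℝ) / q with hD
  have hγ0 : 0 < γ := by rw [hγ]; linarith
  have hD0 : 0 < D := by
    rw [hD]; have : 0 ≤ (n : ℝ) / q := by positivity
    linarith
  have hτn : D * p ≤ (n : ℝ) + a := by
    have h1 : p * D ≤ (n : ℝ) + min a 0 := by
      have h2 : p ≤ ((n : ℝ) + min a 0) / D := by
        rw [hD, hγ]; exact hp1
    -- rearrange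
      exact (le_div_iff₀ hD0).mp h2
    have h3 : min a 0 ≤ a := min_le_left a 0
    nlinarith
  set K₁ : ℝ≥0∞ := ENNReal.ofReal ((n : ℝ) ^ n) * volume (Metric.ball (0 : En n) 1) with hK₁
  haveI : Nontrivial (En n) := CHAux.nontrivial_En hn
  have hK₁0 : K₁ ≠ 0 := by
    refine mul_ne_zero ?_ (Metric.measure_ball_pos _ _ one_pos).ne'
    rw [Ne, ENNReal.ofReal_eq_zero, not_le]
    positivity
  have hK₁top : K₁ ≠ ⊤ :=
    (ENNReal.mul_lt_top ENNReal.ofReal_lt_top measure_ball_lt_top).ne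
  -- Step 1: the local seminorm infimum vanishes on every cube centered at the origin
  have hkey : ∀ R : ℝ, 0 < R →
      (⨅ P : {P : En n → ℝ // IsPolyDegLe k P},
        (∫⁻ y in cube (0 : En n) R, ENNReal.ofReal (|g y - P.1 y| ^ q)) ^ (1 / q)) = 0 := by
    intro R hR
    by_contra hc
    set cInf : ℝ≥0∞ := ⨅ P : {P : En n → ℝ // IsPolyDegLe k P},
        (∫⁻ y in cube (0 : En n) R, ENNReal.ofReal (|g y - P.1 y| ^ q)) ^ (1 / q) with hcInf
    have hzeroPoly : IsPolyDegLe k (fun _ : En n => (0 : ℝ)) :=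
      ⟨0, by simp, fun x => by simp⟩
    have hcInf_top : cInf < ⊤ := by
      refine lt_of_le_of_lt (iInf_le _ ⟨_, hzeroPoly⟩) ?_
      have h4 : ∫⁻ y in cube (0 : En n) R,
          ENNReal.ofReal (|g y - (fun _ : En n => (0 : ℝ)) y| ^ q) < ⊤ := by
        simpa using hg.2 0 R hR
      exact ENNReal.rpow_lt_top_of_nonneg (by positivity) h4.ne
    -- pointwise lower bound for the maximal function
    have hNlow : ∀ x : En n,
        (K₁ ^ (1 / q))⁻¹ * ENNReal.ofReal ((2 * ‖x‖ + R) ^ (-D)) * cInf ≤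
          Nmax q γ k g x := by
      intro x
      set r : ℝ := 2 * ‖x‖ + R with hrdef
      have hr : 0 < r := by
        rw [hrdef]; have := norm_nonneg x; linarith
      have hsubQ : cube (0 : En n) R ⊆ cube x r := by
        intro y hy i
        have h5 := hy i
        have hz : (0 : En n) i = 0 := rfl
        rw [hz, sub_zero] at h5
        have h6 : |x i| ≤ ‖x‖ := CHAux.abs_apply_le_norm x i
        have h7 : |y i - x i| ≤ |y i| + |x i| := abs_sub _ _
        rw [hrdef]
        have h8 : |y i - x i| ≤ R / 2 + ‖x‖ := by linarith
        linarith
      refine le_iInf fun P => ?_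
      set I : ℝ≥0∞ := ∫⁻ y in cube (0 : En n) R, ENNReal.ofReal (|g y - P.1 y| ^ q) with hI
      have h2 : ((K₁ * ENNReal.ofReal (r ^ n))⁻¹ * I) ^ (1 / q) ≤
          lqQ q (fun y => g y - P.1 y) (cube x r) := by
        rw [lqQ]
        refine ENNReal.rpow_le_rpow ?_ (by positivity)
        refine mul_le_mul' ?_ (lintegral_mono_set hsubQ)
        exact ENNReal.inv_le_inv.mpr (CHAux.volume_cube_le x hr.le)
      have h3 : ((K₁ * ENNReal.ofReal (r ^ n))⁻¹ * I) ^ (1 / q) =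
          (K₁ ^ (1 / q))⁻¹ * ENNReal.ofReal (r ^ (-((n : ℝ) / q))) * I ^ (1 / q) := by
        rw [ENNReal.mul_rpow_of_nonneg _ _ (by positivity), ENNReal.inv_rpow,
          CHAux.inv_rpow_mul_ofReal_pow K₁ hK₁0 hK₁top hr hq0]
      have hstep : (K₁ ^ (1 / q))⁻¹ * ENNReal.ofReal (r ^ (-D)) * I ^ (1 / q) ≤
          eta q γ (fun y => g y - P.1 y) x := by
        have hsplit : (K₁ ^ (1 / q))⁻¹ * ENNReal.ofReal (r ^ (-D)) * I ^ (1 / q) =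
            ENNReal.ofReal (r ^ (-γ)) *
              ((K₁ ^ (1 / q))⁻¹ * ENNReal.ofReal (r ^ (-((n : ℝ) / q))) * I ^ (1 / q)) := by
          rw [show (-D : ℝ) = (-γ) + (-((n : ℝ) / q)) by rw [hD]; ring,
            Real.rpow_add hr, ENNReal.ofReal_mul (by positivity)]
          ring
        rw [hsplit]
        calc ENNReal.ofReal (r ^ (-γ)) *
              ((K₁ ^ (1 / q))⁻¹ * ENNReal.ofReal (r ^ (-((n : ℝ) / q))) * I ^ (1 / q))
            ≤ ENNReal.ofReal (r ^ (-γ)) * lqQ q (fun y => g y - P.1 y) (cube x r) :=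
              mul_le_mul_right (h3 ▸ h2) _
          _ ≤ eta q γ (fun y => g y - P.1 y) x :=
              le_iSup₂ (f := fun (r' : ℝ) (_ : 0 < r') =>
                ENNReal.ofReal (r' ^ (-γ)) * lqQ q (fun y => g y - P.1 y) (cube x r')) r hr
      calc (K₁ ^ (1 / q))⁻¹ * ENNReal.ofReal (r ^ (-D)) * cInf
          ≤ (K₁ ^ (1 / q))⁻¹ * ENNReal.ofReal (r ^ (-D)) * I ^ (1 / q) :=
            mul_le_mul_right (iInf_le _ P) _
        _ ≤ eta q γ (fun y => g y - P.1 y) x := hstep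
    -- the constant
    set R₁ : ℝ := max R 1 with hR₁
    have hR₁1 : 1 ≤ R₁ := le_max_right _ _
    have hRR₁ : R ≤ R₁ := le_max_left _ _
    set κ : ℝ≥0∞ := (K₁ ^ (1 / q))⁻¹ ^ p * ENNReal.ofReal (3 ^ (-D * p)) * cInf ^ p with hκ
    have hK₁q0 : (K₁ ^ (1 / q))⁻¹ ≠ 0 := by
      rw [Ne, ENNReal.inv_eq_zero]
      exact ENNReal.rpow_ne_top_of_nonneg (by positivity) hK₁top
    have hK₁qtop : (K₁ ^ (1 / q))⁻¹ ≠ ⊤ := by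
      rw [Ne, ENNReal.inv_eq_top]
      intro h
      rw [ENNReal.rpow_eq_zero_iff] at h
      rcases h with ⟨h1, _⟩ | ⟨_, h2⟩
      · exact hK₁0 h1
      · exact (by positivity : (0 : ℝ) < 1 / q).not_gt h2
    have hκ0 : κ ≠ 0 := by
      refine mul_ne_zero (mul_ne_zero ?_ ?_) ?_
      · rw [Ne, ENNReal.rpow_eq_zero_iff]
        rintro (⟨h1, _⟩ | ⟨h1, _⟩)
        · exact hK₁q0 h1
        · exact hK₁qtop h1
      · rw [Ne, ENNReal.ofReal_eq_zero, not_le]; positivity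
      · rw [Ne, ENNReal.rpow_eq_zero_iff]
        rintro (⟨h1, _⟩ | ⟨h1, _⟩)
        · exact hc h1
        · exact hcInf_top.ne h1
    have hκtop : κ ≠ ⊤ := by
      refine ENNReal.mul_ne_top (ENNReal.mul_ne_top ?_ ENNReal.ofReal_ne_top) ?_
      · exact ENNReal.rpow_ne_top_of_nonneg hp0.le hK₁qtop
      · exact ENNReal.rpow_ne_top_of_nonneg hp0.le hcInf_top.ne
    -- pointwise estimate on the outer region
    have hpoint : ∀ x ∈ {x : En n | R₁ ≤ ‖x‖},
        κ * ENNReal.ofReal (‖x‖ ^ (-(n : ℝ))) ≤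
          Nmax q γ k g x ^ p * ENNReal.ofReal (‖x‖ ^ a) := by
      intro x hx
      have hx1 : (1 : ℝ) ≤ ‖x‖ := le_trans hR₁1 hx
      have hx0 : (0 : ℝ) < ‖x‖ := lt_of_lt_of_le one_pos hx1
      have hr0 : (0 : ℝ) < 2 * ‖x‖ + R := by linarith
      have hrle : 2 * ‖x‖ + R ≤ 3 * ‖x‖ := by
        have := le_trans hRR₁ hx; linarith
      have hexp : ((K₁ ^ (1 / q))⁻¹ * ENNReal.ofReal ((2 * ‖x‖ + R) ^ (-D)) * cInf) ^ p =
          (K₁ ^ (1 / q))⁻¹ ^ p * ENNReal.ofReal ((2 * ‖x‖ + R) ^ (-D * p)) * cInf ^ p := by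
        rw [ENNReal.mul_rpow_of_nonneg _ _ hp0.le, ENNReal.mul_rpow_of_nonneg _ _ hp0.le,
          ENNReal.ofReal_rpow_of_pos (Real.rpow_pos_of_pos hr0 _), ← Real.rpow_mul hr0.le]
      have hexple : -(n : ℝ) ≤ -D * p + a := by nlinarith
      calc κ * ENNReal.ofReal (‖x‖ ^ (-(n : ℝ)))
          ≤ κ * ENNReal.ofReal (‖x‖ ^ (-D * p + a)) :=
            mul_le_mul_right (ENNReal.ofReal_le_ofReal
              (Real.rpow_le_rpow_of_exponent_le hx1 hexple)) _
        _ = (K₁ ^ (1 / q))⁻¹ ^ p * ENNReal.ofReal ((3 * ‖x‖) ^ (-D * p)) * cInf ^ p *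
              ENNReal.ofReal (‖x‖ ^ a) := by
            rw [hκ, Real.mul_rpow (by norm_num) (norm_nonneg x), Real.rpow_add hx0,
              ENNReal.ofReal_mul (by positivity), ENNReal.ofReal_mul (by positivity)]
            ring
        _ ≤ (K₁ ^ (1 / q))⁻¹ ^ p * ENNReal.ofReal ((2 * ‖x‖ + R) ^ (-D * p)) * cInf ^ p *
              ENNReal.ofReal (‖x‖ ^ a) := by
            have h9 : (3 * ‖x‖ : ℝ) ^ (-D * p) ≤ (2 * ‖x‖ + R) ^ (-D * p) :=
              Real.rpow_le_rpow_of_nonpos hr0 hrle (by nlinarith)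
            exact mul_le_mul_left (mul_le_mul_left
              (mul_le_mul_right (ENNReal.ofReal_le_ofReal h9) _) _) _
        _ = ((K₁ ^ (1 / q))⁻¹ * ENNReal.ofReal ((2 * ‖x‖ + R) ^ (-D)) * cInf) ^ p *
              ENNReal.ofReal (‖x‖ ^ a) := by rw [hexp]
        _ ≤ Nmax q γ k g x ^ p * ENNReal.ofReal (‖x‖ ^ a) :=
            mul_le_mul_left (ENNReal.rpow_le_rpow (hNlow x) hp0.le) _
    have hmeasS : MeasurableSet {x : En n | R₁ ≤ ‖x‖} :=
      (isClosed_le continuous_const continuous_norm).measurableSet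
    have hbig : (∫⁻ x, Nmax q γ k g x ^ p * ENNReal.ofReal (‖x‖ ^ a)) = ⊤ := by
      refine top_le_iff.mp ?_
      calc (⊤ : ℝ≥0∞) = κ * ⊤ := (ENNReal.mul_top hκ0).symm
        _ = κ * ∫⁻ x in {x : En n | R₁ ≤ ‖x‖}, ENNReal.ofReal (‖x‖ ^ (-(n : ℝ))) := by
            rw [CHAux.lintegral_rpow_neg_n_top hn hR₁1]
        _ = ∫⁻ x in {x : En n | R₁ ≤ ‖x‖}, κ * ENNReal.ofReal (‖x‖ ^ (-(n : ℝ))) :=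
            (lintegral_const_mul' _ _ hκtop).symm
        _ ≤ ∫⁻ x in {x : En n | R₁ ≤ ‖x‖}, Nmax q γ k g x ^ p * ENNReal.ofReal (‖x‖ ^ a) :=
            setLIntegral_mono' hmeasS hpoint
        _ ≤ ∫⁻ x, Nmax q γ k g x ^ p * ENNReal.ofReal (‖x‖ ^ a) :=
            setLIntegral_le_lintegral _ _
    rw [hbig] at hfin
    exact absurd hfin (lt_irrefl ⊤)
  -- Step 2: on each cube the function agrees a.e. with a polynomial
  have hae : ∀ j : ℕ, ∃ pp : MvPolynomial (Fin n) ℝ, pp.totalDegree ≤ k ∧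
      ∀ᵐ y ∂(volume.restrict (cube (0 : En n) ((j : ℝ) + 1))),
        g y = MvPolynomial.eval (fun i => y i) pp := by
    intro j
    have hRj : (0 : ℝ) < (j : ℝ) + 1 := by positivity
    exact CHAux.exists_poly_of_iInf_eq_zero hn k hq hg.1 hRj (hg.2 _ _ hRj) (hkey _ hRj)
  choose pp hdeg haepp using hae
  set P : En n → ℝ := fun x => MvPolynomial.eval (fun i => x i) (pp 0) with hP
  have hone : ((0 : ℕ) : ℝ) + 1 = 1 := by norm_num
  have hsame : ∀ j : ℕ, ∀ x : En n, MvPolynomial.eval (fun i => x i) (pp j) = P x := by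
    intro j
    have h1 : cube (0 : En n) 1 ⊆ cube (0 : En n) ((j : ℝ) + 1) := by
      intro y hy i
      have h5 := hy i
      have h6 : (1 : ℝ) / 2 ≤ ((j : ℝ) + 1) / 2 := by
        have : (0 : ℝ) ≤ j := Nat.cast_nonneg j
        linarith
      exact le_trans h5 h6
    have haej : g =ᵐ[volume.restrict (cube (0 : En n) 1)]
        fun y => MvPolynomial.eval (fun i => y i) (pp j) :=
      ae_restrict_of_ae_restrict_of_subset h1 (haepp j)
    have hae0 : g =ᵐ[volume.restrict (cube (0 : En n) 1)]
        fun y => MvPolynomial.eval (fun i => y i) (pp 0) := by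
      have := haepp 0
      rwa [hone] at this
    exact CHAux.eval_eq_of_ae_eq_cube hn (haej.symm.trans hae0)
  refine ⟨P, ⟨pp 0, hdeg 0, fun x => rfl⟩, ?_⟩
  have hNe : MeasurableSet {x : En n | ¬ g x = P x} :=
    (measurableSet_eq_fun hg.1 (CHAux.continuous_evalFn (pp 0)).measurable).compl
  have hnull : ∀ j : ℕ,
      volume ({x : En n | ¬ g x = P x} ∩ cube (0 : En n) ((j : ℝ) + 1)) = 0 := by
    intro j
    have h2 : ∀ᵐ y ∂(volume.restrict (cube (0 : En n) ((j : ℝ) + 1))), g y = P y := by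
      filter_upwards [haepp j] with y hy
      rw [hy, hsame j y]
    have h3 := ae_iff.mp h2
    rwa [Measure.restrict_apply hNe] at h3
  have hcover : {x : En n | ¬ g x = P x} ⊆
      ⋃ j : ℕ, ({x : En n | ¬ g x = P x} ∩ cube (0 : En n) ((j : ℝ) + 1)) := by
    intro x hx
    obtain ⟨j, hj⟩ := exists_nat_ge (2 * ‖x‖)
    refine Set.mem_iUnion.mpr ⟨j, hx, fun i => ?_⟩
    have h6 := CHAux.abs_apply_le_norm x i
    have hz : (0 : En n) i = 0 := rfl
    rw [hz, sub_zero]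
    linarith
  rw [MeasureTheory.ae_iff]
  exact measure_mono_null hcover (measure_iUnion_null hnull)

end
end

section
/- Let 1 < q < ∞, γ > 0, 0 < p ≤ 1, and let w be a weight. For every cube Q there is a constant C such that ‖G‖_{q,Q} ≤ C [w(Q)]^{-1/p} ‖χ_Q(·) N_{q,γ}(G;·)‖_{L^p(ℝⁿ,w)} for all G ∈ E^q_k. Consequently, if {G_j} is a sequence of elements of E^q_k converging to G in H^p_{q,γ}(ℝⁿ,w) (that is, ‖N_{q,γ}(G − G_j;·)‖_{L^p(ℝⁿ,w)} → 0), then ‖G − G_j‖_{q,Q} → 0 for every cube Q, i.e. G_j → G in E^q_k. -/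
open MeasureTheory ENNReal Filter Topology

noncomputable section

lemma cube_isClosed {n : ℕ} (x : En n) (r : ℝ) : IsClosed (cube x r) := by
  have : cube x r = ⋂ i, {y : En n | |y i - x i| ≤ r / 2} := by
    ext y; simp [cube, Set.mem_iInter]
  rw [this]
  refine isClosed_iInter fun i => ?_
  have hc : Continuous fun y : En n => |y i - x i| := by
    have : Continuous fun y : En n => y i := by
      exact (continuous_apply i).comp (PiLp.continuous_ofLp 2 fun _ : Fin n => ℝ)
    continuity
  exact isClosed_le hc continuous_const


lemma cube_measurableSet {n : ℕ} (x : En n) (r : ℝ) : MeasurableSet (cube x r) :=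
  (cube_isClosed x r).measurableSet


lemma abs_coord_le_norm {n : ℕ} (y : En n) (i : Fin n) : |y i| ≤ ‖y‖ := by
  rw [EuclideanSpace.norm_eq]
  calc |y i| = Real.sqrt (|y i| ^ 2) := by rw [Real.sqrt_sq_eq_abs, abs_abs]
  _ ≤ _ := by
      apply Real.sqrt_le_sqrt
      have := Finset.single_le_sum (f := fun j => ‖y j‖ ^ 2) (fun j _ => by positivity)
        (Finset.mem_univ i)
      simpa using this


lemma cube_subset_ball {n : ℕ} (x : En n) (r : ℝ) (hr : 0 ≤ r) :
    cube x r ⊆ Metric.closedBall x (Real.sqrt n * (r / 2)) := by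
  intro y hy
  rw [Metric.mem_closedBall, dist_eq_norm, EuclideanSpace.norm_eq]
  have h1 : ∑ i, ‖(y - x) i‖ ^ 2 ≤ (n : ℝ) * (r / 2) ^ 2 := by
    calc ∑ i, ‖(y - x) i‖ ^ 2 ≤ ∑ _i : Fin n, (r / 2) ^ 2 := by
          refine Finset.sum_le_sum fun i _ => ?_
          have := hy i
          have h2 : ‖(y - x) i‖ = |y i - x i| := by simp [PiLp.sub_apply]
          rw [h2]
          exact pow_le_pow_left₀ (abs_nonneg _) this 2
      _ = (n : ℝ) * (r / 2) ^ 2 := by simp [Finset.sum_const]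
  calc Real.sqrt (∑ i, ‖(y - x) i‖ ^ 2) ≤ Real.sqrt ((n : ℝ) * (r / 2) ^ 2) :=
        Real.sqrt_le_sqrt h1
    _ = Real.sqrt n * (r / 2) := by
        rw [Real.sqrt_mul (Nat.cast_nonneg n), Real.sqrt_sq (by positivity)]


lemma ball_subset_cube {n : ℕ} (x : En n) (r : ℝ) :
    Metric.ball x (r / 2) ⊆ cube x r := by
  intro y hy i
  rw [Metric.mem_ball, dist_eq_norm] at hy
  have h2 : |y i - x i| = |(y - x) i| := by simp [PiLp.sub_apply]
  rw [h2]
  exact (abs_coord_le_norm _ i).trans hy.le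


lemma volume_cube_pos {n : ℕ} (x : En n) (r : ℝ) (hr : 0 < r) :
    0 < volume (cube x r) :=
  lt_of_lt_of_le (Metric.measure_ball_pos _ _ (by linarith)) (measure_mono (ball_subset_cube x r))


lemma volume_cube_lt_top {n : ℕ} (x : En n) (r : ℝ) (hr : 0 < r) :
    volume (cube x r) < ⊤ :=
  lt_of_le_of_lt (measure_mono (cube_subset_ball x r hr.le))
    measure_closedBall_lt_top


lemma volume_cube_eq {n : ℕ} (x z : En n) (r : ℝ) :
    volume (cube x r) = volume (cube z r) := by
  have h : cube x r = (fun y : En n => y + (z - x)) ⁻¹' cube z r := by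
    ext y
    simp only [cube, Set.mem_setOf_eq, Set.mem_preimage, PiLp.add_apply, PiLp.sub_apply]
    constructor <;> intro hy i <;> have := hy i <;> (convert this using 2; ring)
  rw [h, measure_preimage_add_right]


lemma cube_sub {n : ℕ} {z x : En n} {s : ℝ} (hx : x ∈ cube z s) :
    cube z s ⊆ cube x (2 * s) := by
  intro y hy i
  have h1 := hy i
  have h2 := hx i
  have : |y i - x i| ≤ |y i - z i| + |x i - z i| := by
    calc |y i - x i| = |(y i - z i) - (x i - z i)| := by ring_nf
    _ ≤ _ := abs_sub _ _
  have h3 : 2 * s / 2 = s / 2 + s / 2 := by ring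
  rw [h3]
  exact this.trans (add_le_add h1 h2)

lemma pointwise_bound {n : ℕ} (q γ : ℝ) (k : ℕ) (hq : 0 < q) (g : En n → ℝ)
    (z x : En n) (s : ℝ) (hs : 0 < s) (hx : x ∈ cube z s) :
    (ENNReal.ofReal ((2 * s) ^ (-γ)) *
        ((volume (cube z (2 * s)))⁻¹ * volume (cube z s)) ^ (1 / q)) *
      qnormQ q k g (cube z s) ≤ Nmax q γ k g x := by
  set V := volume (cube z s) with hV
  set V₂ := volume (cube z (2 * s)) with hV₂
  have hV0 : V ≠ 0 := (volume_cube_pos z s hs).ne'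
  have hVt : V ≠ ⊤ := (volume_cube_lt_top z s hs).ne
  refine le_iInf fun P => ?_
  set h := fun y => g y - P.1 y with hh
  have step1 : (V₂⁻¹ * V) ^ (1 / q) * lqQ q h (cube z s) ≤ lqQ q h (cube x (2 * s)) := by
    unfold lqQ
    rw [volume_cube_eq x z (2 * s), ← hV₂, ← hV,
      ← ENNReal.mul_rpow_of_nonneg _ _ (by positivity : (0:ℝ) ≤ 1 / q)]
    refine ENNReal.rpow_le_rpow ?_ (by positivity)
    calc V₂⁻¹ * V * (V⁻¹ * ∫⁻ y in cube z s, ENNReal.ofReal (|h y| ^ q))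
        = V₂⁻¹ * (V * V⁻¹) * ∫⁻ y in cube z s, ENNReal.ofReal (|h y| ^ q) := by ring
      _ = V₂⁻¹ * ∫⁻ y in cube z s, ENNReal.ofReal (|h y| ^ q) := by
          rw [ENNReal.mul_inv_cancel hV0 hVt, mul_one]
      _ ≤ V₂⁻¹ * ∫⁻ y in cube x (2 * s), ENNReal.ofReal (|h y| ^ q) :=
          mul_le_mul_right (lintegral_mono_set (cube_sub hx)) _
  calc (ENNReal.ofReal ((2 * s) ^ (-γ)) * ((V₂)⁻¹ * V) ^ (1 / q)) * qnormQ q k g (cube z s)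
      ≤ (ENNReal.ofReal ((2 * s) ^ (-γ)) * ((V₂)⁻¹ * V) ^ (1 / q)) * lqQ q h (cube z s) :=
        mul_le_mul_right (iInf_le _ P) _
    _ = ENNReal.ofReal ((2 * s) ^ (-γ)) * (((V₂)⁻¹ * V) ^ (1 / q) * lqQ q h (cube z s)) :=
        mul_assoc _ _ _
    _ ≤ ENNReal.ofReal ((2 * s) ^ (-γ)) * lqQ q h (cube x (2 * s)) :=
        mul_le_mul_right step1 _
    _ ≤ eta q γ h x :=
        le_iSup_of_le (2 * s) (le_iSup_of_le (by linarith) le_rfl)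


lemma wInt_pos {n : ℕ} (w : En n → ℝ) (hw : IsWeight w) (z : En n) (s : ℝ) (hs : 0 < s) :
    0 < wInt w (cube z s) := by
  set μ := volume.restrict (cube z s)
  have hf : Measurable fun x : En n => ENNReal.ofReal (w x) :=
    ENNReal.measurable_ofReal.comp hw.1
  rw [wInt, lintegral_pos_iff_support hf]
  have hN : volume {x : En n | ¬ 0 < w x} = 0 := hw.2.2.1
  have hc : μ (Function.support fun x => ENNReal.ofReal (w x))ᶜ = 0 := by
    refine measure_mono_null ?_
      (le_antisymm ((Measure.restrict_le_self _).trans_eq hN) zero_le)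
    intro x hx
    simp only [Function.support, Set.mem_compl_iff, Set.mem_setOf_eq, not_not] at hx
    simp only [Set.mem_setOf_eq]
    intro hpos
    rw [ENNReal.ofReal_eq_zero] at hx
    linarith
  have huniv : μ Set.univ = volume (cube z s) := by
    simp [μ, Measure.restrict_apply_univ]
  have := measure_union_le (μ := μ) (Function.support fun x => ENNReal.ofReal (w x))
    (Function.support fun x => ENNReal.ofReal (w x))ᶜ
  rw [Set.union_compl_self, hc, add_zero, huniv] at this
  exact lt_of_lt_of_le (volume_cube_pos z s hs) this


lemma cube_isCompact {n : ℕ} (x : En n) (r : ℝ) (hr : 0 ≤ r) : IsCompact (cube x r) :=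
  Metric.isCompact_of_isClosed_isBounded (cube_isClosed x r)
    (Metric.isBounded_closedBall.subset (cube_subset_ball x r hr))


lemma wInt_lt_top {n : ℕ} (w : En n → ℝ) (hw : IsWeight w) (z : En n) (s : ℝ) (hs : 0 < s) :
    wInt w (cube z s) < ⊤ :=
  (hw.2.2.2.integrableOn_isCompact (cube_isCompact z s hs.le)).lintegral_lt_top


theorem main (n : ℕ) (q γ p : ℝ) (k : ℕ) (hq : 1 < q)
    (hp0 : 0 < p) (hp1 : p ≤ 1) (w : En n → ℝ) (hw : IsWeight w)
    (z : En n) (s : ℝ) (hs : 0 < s) :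
    ∃ C : ℝ≥0∞, C ≠ 0 ∧ C < ⊤ ∧ ∀ g : En n → ℝ,
      qnormQ q k g (cube z s) ≤
        C * (wInt w (cube z s)) ^ (-(1 / p)) *
          (∫⁻ x in cube z s, Nmax q γ k g x ^ p * ENNReal.ofReal (w x)) ^ (1 / p) := by
  set c := ENNReal.ofReal ((2 * s) ^ (-γ)) *
    ((volume (cube z (2 * s)))⁻¹ * volume (cube z s)) ^ (1 / q) with hc
  have hs2 : (0:ℝ) < 2 * s := by linarith
  have hV0 : volume (cube z s) ≠ 0 := (volume_cube_pos z s hs).ne'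
  have hVt : volume (cube z s) ≠ ⊤ := (volume_cube_lt_top z s hs).ne
  have hV₂0 : volume (cube z (2 * s)) ≠ 0 := (volume_cube_pos z (2 * s) hs2).ne'
  have hV₂t : volume (cube z (2 * s)) ≠ ⊤ := (volume_cube_lt_top z (2 * s) hs2).ne
  have hc0 : c ≠ 0 := by
    rw [hc]
    apply mul_ne_zero
    · simp [ENNReal.ofReal_eq_zero, not_le, Real.rpow_pos_of_pos hs2]
    · have hb0 : (volume (cube z (2 * s)))⁻¹ * volume (cube z s) ≠ 0 :=
        mul_ne_zero (ENNReal.inv_ne_zero.mpr hV₂t) hV0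
      have hbt : (volume (cube z (2 * s)))⁻¹ * volume (cube z s) ≠ ⊤ :=
        ENNReal.mul_ne_top (ENNReal.inv_ne_top.mpr hV₂0) hVt
      simp [ENNReal.rpow_eq_zero_iff, hb0, hbt]
  have hctop : c ≠ ⊤ := by
    rw [hc]
    apply ENNReal.mul_ne_top ENNReal.ofReal_ne_top
    exact (ENNReal.rpow_lt_top_of_nonneg (by positivity)
      (ENNReal.mul_ne_top (ENNReal.inv_ne_top.mpr hV₂0) hVt)).ne
  refine ⟨c⁻¹, ENNReal.inv_ne_zero.mpr hctop, ENNReal.inv_lt_top.mpr (pos_iff_ne_zero.mpr hc0),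
    fun g => ?_⟩
  set A := qnormQ q k g (cube z s) with hA
  set W := wInt w (cube z s) with hW
  have hW0 : W ≠ 0 := (wInt_pos w hw z s hs).ne'
  have hWt : W ≠ ⊤ := (wInt_lt_top w hw z s hs).ne
  have key : ∀ x ∈ cube z s, c * A ≤ Nmax q γ k g x :=
    fun x hx => pointwise_bound q γ k (by linarith) g z x s hs hx
  have h1 : (c * A) ^ p * W ≤ ∫⁻ x in cube z s, Nmax q γ k g x ^ p * ENNReal.ofReal (w x) := by
    rw [hW, wInt, ← lintegral_const_mul'' _
      (hw.1.ennreal_ofReal.aemeasurable.restrict)]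
    refine lintegral_mono_ae ?_
    filter_upwards [ae_restrict_mem (cube_measurableSet z s)] with x hx
    exact mul_le_mul_left (ENNReal.rpow_le_rpow (key x hx) hp0.le) _
  have h2 : c * A * W ^ (1 / p) ≤
      (∫⁻ x in cube z s, Nmax q γ k g x ^ p * ENNReal.ofReal (w x)) ^ (1 / p) := by
    have := ENNReal.rpow_le_rpow h1 (by positivity : (0:ℝ) ≤ 1 / p)
    rwa [ENNReal.mul_rpow_of_nonneg _ _ (by positivity : (0:ℝ) ≤ 1 / p),
      ← ENNReal.rpow_mul, mul_one_div_cancel hp0.ne', ENNReal.rpow_one] at this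
  have hWp0 : W ^ (1 / p) ≠ 0 := by
    simp [ENNReal.rpow_eq_zero_iff, hW0, hWt]
  have hWpt : W ^ (1 / p) ≠ ⊤ := (ENNReal.rpow_lt_top_of_nonneg (by positivity) hWt).ne
  calc A = (c⁻¹ * c) * ((W ^ (1 / p))⁻¹ * W ^ (1 / p)) * A := by
        rw [ENNReal.inv_mul_cancel hc0 hctop, ENNReal.inv_mul_cancel hWp0 hWpt, one_mul, one_mul]
    _ = c⁻¹ * W ^ (-(1 / p)) * (c * A * W ^ (1 / p)) := by
        rw [ENNReal.rpow_neg]; ring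
    _ ≤ c⁻¹ * W ^ (-(1 / p)) *
        (∫⁻ x in cube z s, Nmax q γ k g x ^ p * ENNReal.ofReal (w x)) ^ (1 / p) :=
        mul_le_mul_right h2 _


/-- **Corollary.** For every cube `Q` there is a constant `C` with
`‖G‖_{q,Q} ≤ C [w(Q)]^{-1/p} ‖χ_Q N_{q,γ}(G;·)‖_{L^p(w)}`; consequently convergence in
`𝓗^p_{q,γ}(ℝⁿ,w)` implies convergence in `E^q_k`. -/
theorem convergence_CalderonHardy_implies_Eqk
    (n : ℕ) (q γ p : ℝ) (k : ℕ) (hq : 1 < q)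
    (hγ0 : (k : ℝ) < γ) (hγ1 : γ ≤ (k : ℝ) + 1)
    (hp0 : 0 < p) (hp1 : p ≤ 1) (w : En n → ℝ) (hw : IsWeight w)
    (z : En n) (s : ℝ) (hs : 0 < s) :
    (∃ C : ℝ≥0∞, C < ⊤ ∧ ∀ g : En n → ℝ, MemLqLoc q g →
      qnormQ q k g (cube z s) ≤
        C * (wInt w (cube z s)) ^ (-(1 / p)) *
          (∫⁻ x in cube z s, Nmax q γ k g x ^ p * ENNReal.ofReal (w x)) ^ (1 / p)) ∧
    (∀ (g : En n → ℝ) (gs : ℕ → En n → ℝ), MemLqLoc q g → (∀ j, MemLqLoc q (gs j)) →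
      Tendsto (fun j => chNorm q γ k p w (fun y => g y - gs j y)) atTop (𝓝 0) →
      Tendsto (fun j => qnormQ q k (fun y => g y - gs j y) (cube z s)) atTop (𝓝 0)) := by
  obtain ⟨C, hC0, hCt, hbound⟩ := main n q γ p k hq hp0 hp1 w hw z s hs
  set W := wInt w (cube z s) with hWdef
  have hW0 : W ≠ 0 := (wInt_pos w hw z s hs).ne'
  have hWt : W ≠ ⊤ := (wInt_lt_top w hw z s hs).ne
  have hWp : W ^ (-(1 / p)) ≠ ⊤ := by
    rw [ENNReal.rpow_neg]
    refine ENNReal.inv_ne_top.mpr ?_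
    simp [ENNReal.rpow_eq_zero_iff, hW0, hWt]
  constructor
  · exact ⟨C, hCt, fun g _ => hbound g⟩
  · intro g gs hg hgs htend
    set K := C * W ^ (-(1 / p)) with hK
    have hKt : K ≠ ⊤ := ENNReal.mul_ne_top hCt.ne hWp
    have hb : ∀ j, qnormQ q k (fun y => g y - gs j y) (cube z s) ≤
        K * chNorm q γ k p w (fun y => g y - gs j y) := by
      intro j
      refine (hbound _).trans ?_
      rw [hK]
      gcongr
      exact ENNReal.rpow_le_rpow (setLIntegral_le_lintegral _ _) (by positivity)
    have hupper : Tendsto (fun j => K * chNorm q γ k p w (fun y => g y - gs j y))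
        atTop (𝓝 0) := by
      have := ENNReal.Tendsto.const_mul (a := K) htend (Or.inr hKt)
      simpa using this
    exact tendsto_of_tendsto_of_tendsto_of_le_of_le tendsto_const_nhds hupper
      (fun j => zero_le) hb


end
end

section
/- Let m ≥ 1, 1 < q < ∞, and let g ∈ L^q_loc(ℝⁿ), r > 1 and C > 0 be such that ∫_{Q(0,r)} |g(y) − P(y)|^q dy ≥ C for every polynomial P of degree at most 2m−1. Let F be the class of g in E^q_{2m−1}. Then there is a constant C' > 0 such that N_{q,2m}(F; x) ≥ C'|x|^{−2m−n/q} for every x with |x| > √n · r. -/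
open MeasureTheory ENNReal Filter Topology

noncomputable section

lemma abs_coord_le {n : ℕ} (x : En n) (i : Fin n) : |x i| ≤ ‖x‖ := by
  have h := abs_real_inner_le_norm (EuclideanSpace.single i (1:ℝ)) x
  rw [EuclideanSpace.inner_single_left, EuclideanSpace.norm_single] at h
  simpa using h

lemma cube_eq_preimage {n : ℕ} (x : En n) (r : ℝ) :
    cube x r = (MeasurableEquiv.toLp 2 (Fin n → ℝ)).symm ⁻¹'
      (Set.univ.pi fun i => Set.Icc (x i - r/2) (x i + r/2)) := by
  ext y
  simp [cube, Set.mem_pi, abs_sub_le_iff]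
  rw [Pi.le_def, Pi.le_def]
  constructor
  · intro h; exact ⟨fun i => by linarith [(h i).1, (h i).2], fun i => by linarith [(h i).1, (h i).2]⟩
  · intro h i; constructor <;> [skip; skip] <;> linarith [h.1 i, h.2 i]

lemma volume_cube {n : ℕ} (x : En n) (r : ℝ) (hr : 0 ≤ r) :
    volume (cube x r) = ENNReal.ofReal (r ^ n) := by
  rw [cube_eq_preimage,
    (EuclideanSpace.volume_preserving_symm_measurableEquiv_toLp (Fin n)).measure_preimage
      (MeasurableSet.univ_pi fun i => measurableSet_Icc).nullMeasurableSet]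
  rw [volume_pi_pi]
  simp [Real.volume_Icc]
  exact (ENNReal.ofReal_pow hr n).symm

lemma real_key (m n : ℕ) (q C t : ℝ) (hq : 1 < q) (hC : 0 < C) (ht : 0 < t) :
    3 ^ (-(2 * (m : ℝ)) - (n : ℝ) / q) * C ^ (1/q) * t ^ (-(2 * (m : ℝ)) - (n : ℝ) / q)
      = (3*t) ^ (-(2 * (m : ℝ))) * (((3*t)^n)⁻¹ * C) ^ (1/q) := by
  have h3t : (0:ℝ) < 3*t := by linarith
  rw [← Real.rpow_natCast (3*t) n, ← Real.rpow_neg h3t.le,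
    Real.mul_rpow (Real.rpow_nonneg h3t.le _) hC.le,
    ← Real.rpow_mul h3t.le, ← mul_assoc, ← Real.rpow_add h3t,
    show -(n:ℝ) * (1/q) = -((n:ℝ)/q) by ring,
    show -(2 * (m : ℝ)) + -((n:ℝ)/q) = -(2 * (m : ℝ)) - (n : ℝ) / q by ring,
    Real.mul_rpow (by norm_num) ht.le]
  ring

/-- If `∫_{Q(0,r)} |g - P|^q ≥ C > 0` for all polynomials `P` of degree at most `2m-1`, then
the class `F` of `g` satisfies `N_{q,2m}(F;x) ≥ C'|x|^{-2m-n/q}` for `|x| > √n·r`. -/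
theorem Nmax_lower_bound_of_nondegenerate
    (n m : ℕ) (hn : 1 ≤ n) (hm : 1 ≤ m) (q : ℝ) (hq : 1 < q)
    (g : En n → ℝ) (hg : MemLqLoc q g) (r C : ℝ) (hr : 1 < r) (hC : 0 < C)
    (hlow : ∀ P : En n → ℝ, IsPolyDegLe (2 * m - 1) P →
      ENNReal.ofReal C ≤ ∫⁻ y in cube 0 r, ENNReal.ofReal (|g y - P y| ^ q)) :
    ∃ C' : ℝ, 0 < C' ∧ ∀ x : En n, Real.sqrt n * r < ‖x‖ →
      ENNReal.ofReal (C' * ‖x‖ ^ (-(2 * (m : ℝ)) - (n : ℝ) / q)) ≤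
        Nmax q (2 * m) (2 * m - 1) g x := by
  have hq0 : 0 < 1/q := by positivity
  refine ⟨3 ^ (-(2 * (m : ℝ)) - (n : ℝ) / q) * C ^ (1/q), by positivity, ?_⟩
  intro x hx
  have hsq : (1:ℝ) ≤ Real.sqrt n := by
    rw [show (1:ℝ) = Real.sqrt 1 by simp]
    exact Real.sqrt_le_sqrt (by exact_mod_cast hn)
  have hrx : r < ‖x‖ := lt_of_le_of_lt (le_mul_of_one_le_left (by linarith) hsq) hx
  have hxpos : (0:ℝ) < ‖x‖ := by linarith
  set ρ := 3 * ‖x‖ with hρdef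
  have hρ : 0 < ρ := by positivity
  have hsub : cube 0 r ⊆ cube x ρ := by
    intro y hy i
    have h1 : |y i| ≤ r/2 := by simpa using hy i
    have h2 := abs_coord_le x i
    rw [abs_le]
    obtain ⟨a1, a2⟩ := abs_le.mp h1
    obtain ⟨b1, b2⟩ := abs_le.mp h2
    constructor <;> [skip; skip] <;> (simp only [hρdef]; linarith)
  rw [Nmax]
  refine le_iInf ?_
  rintro ⟨P, hP⟩
  have hint : ENNReal.ofReal C ≤ ∫⁻ y in cube x ρ, ENNReal.ofReal (|g y - P y| ^ q) :=
    (hlow P hP).trans (lintegral_mono' (Measure.restrict_mono hsub le_rfl) le_rfl)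
  calc ENNReal.ofReal ((3:ℝ) ^ (-(2 * (m : ℝ)) - (n : ℝ) / q) * C ^ (1/q) *
        ‖x‖ ^ (-(2 * (m : ℝ)) - (n : ℝ) / q))
      = ENNReal.ofReal (ρ ^ (-(2 * (m : ℝ)))) *
          ((ENNReal.ofReal (ρ^n))⁻¹ * ENNReal.ofReal C) ^ (1/q) := by
        rw [real_key m n q C ‖x‖ hq hC hxpos,
          ← ENNReal.ofReal_inv_of_pos (by positivity),
          ← ENNReal.ofReal_mul (by positivity),
          ENNReal.ofReal_rpow_of_pos (by positivity),
          ← ENNReal.ofReal_mul (by positivity)]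
    _ ≤ ENNReal.ofReal (ρ ^ (-(2 * (m : ℝ)))) *
          ((volume (cube x ρ))⁻¹ * ∫⁻ y in cube x ρ, ENNReal.ofReal (|g y - P y| ^ q)) ^ (1/q) := by
        rw [volume_cube x ρ hρ.le]
        exact mul_le_mul_right (ENNReal.rpow_le_rpow (mul_le_mul_right hint _) hq0.le) _
    _ ≤ eta q (2 * m) (fun y => g y - P y) x := by
        rw [eta]
        exact le_iSup_of_le ρ (le_iSup_of_le hρ le_rfl)

end
end
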